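/- arXiv:1307.3068 — 5 statements merged into one kernel-verified Lean document; each statement's English description precedes it below -/
import Mathlib

section
/- Let n ≥ 3 and let H̃ : [0,Y] → ℝ be bounded. Then for sufficiently large M > 0 and sufficiently small Y > 0, there exists a unique continuous function q on (0,Y] with sup_{y∈(0,Y]} |q(y)/y| ≤ M satisfying the integral equation q(y) = y^{2-n} ∫₀^y { -(n-2) q(η)³ + (n-1) H̃(η) η (1 + q(η)²)^{3/2} } η^{n-3} dη for all y ∈ (0,Y]. -/
/-!
Writing `q(y) = y r(y)`, the integral equation becomes the fixed-point equation `r = Φ r`, where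
`Φ r (y) = y ^ (1 - n) ∫₀^y F(η r(η)) dη` and `F` is the integrand, on the ball of radius `M` in
the bounded continuous functions on `(0, Y₁]`. While `|q(η)| ≤ M η`, the integrand is bounded by
`(n - 1) (M / 16 + 2 |H̃(η)|) η ^ (n - 2)`, and `∫₀^y (n - 1) η ^ (n - 2) dη = y ^ (n - 1)` cancels
the singular weight exactly; so `Φ` maps the ball into itself once `M ≥ 4 sup |H̃|` and
`M Y₁ ≤ 1/4`. The same estimate for differences makes `Φ` a `1/2`-contraction, and Banach's fixed
point theorem gives existence and uniqueness.

If `H̃` is not a.e.-measurable on any `(0, a]`, every integral in the equation takes the junk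
value `0`, and `q = 0` is the unique solution.
-/

open MeasureTheory Set
open scoped BoundedContinuousFunction

namespace RotationalSlope

lemma one_add_sq_rpow_three_halves (u : ℝ) :
    (1 + u ^ 2) ^ ((3:ℝ)/2) = √(1 + u ^ 2) ^ 3 := by
  rw [Real.sqrt_eq_rpow, ← Real.rpow_mul_natCast (by positivity)]
  norm_num

lemma abs_sqrt_one_add_sq_sub_le (u v : ℝ) : |√(1 + u ^ 2) - √(1 + v ^ 2)| ≤ |u - v| := by
  set a := √(1 + u ^ 2)
  set b := √(1 + v ^ 2)
  have ha : a ^ 2 = 1 + u ^ 2 := Real.sq_sqrt (by positivity)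
  have hb : b ^ 2 = 1 + v ^ 2 := Real.sq_sqrt (by positivity)
  have hua : |u| ≤ a := Real.abs_le_sqrt (by nlinarith)
  have hvb : |v| ≤ b := Real.abs_le_sqrt (by nlinarith)
  have hab : 0 < a + b := by positivity
  -- `(a - b) (a + b) = (u - v) (u + v)` and `|u + v| ≤ a + b`.
  have key : |a - b| * (a + b) = |u - v| * |u + v| := by
    rw [← abs_of_pos hab, ← abs_mul, ← abs_mul]
    congr 1
    nlinarith
  have huv : |u + v| ≤ a + b := (abs_add_le u v).trans (add_le_add hua hvb)
  nlinarith [abs_nonneg (u - v)]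

lemma abs_cube_sub_le {R u v : ℝ} (hu : |u| ≤ R) (hv : |v| ≤ R) :
    |u ^ 3 - v ^ 3| ≤ 3 * R ^ 2 * |u - v| := by
  rw [show u ^ 3 - v ^ 3 = (u - v) * (u ^ 2 + u * v + v ^ 2) by ring, abs_mul, mul_comm]
  gcongr
  have hu2 : u ^ 2 ≤ R ^ 2 := sq_le_sq' (abs_le.1 hu).1 (abs_le.1 hu).2
  have hv2 : v ^ 2 ≤ R ^ 2 := sq_le_sq' (abs_le.1 hv).1 (abs_le.1 hv).2
  rw [abs_le]
  constructor <;> nlinarith [sq_nonneg (u + v), sq_nonneg (u - v)]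

lemma one_add_sq_rpow_le {R u : ℝ} (hu : |u| ≤ R) :
    (1 + u ^ 2) ^ ((3:ℝ)/2) ≤ (1 + R ^ 2) ^ 2 := by
  have hu2 : u ^ 2 ≤ R ^ 2 := sq_le_sq' (abs_le.1 hu).1 (abs_le.1 hu).2
  calc (1 + u ^ 2) ^ ((3:ℝ)/2) ≤ (1 + u ^ 2) ^ ((2:ℕ):ℝ) :=
        Real.rpow_le_rpow_of_exponent_le (by nlinarith) (by norm_num)
    _ ≤ (1 + R ^ 2) ^ 2 := by rw [Real.rpow_natCast]; gcongr

lemma abs_one_add_sq_rpow_sub_le {R u v : ℝ} (hu : |u| ≤ R) (hv : |v| ≤ R) :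
    |(1 + u ^ 2) ^ ((3:ℝ)/2) - (1 + v ^ 2) ^ ((3:ℝ)/2)| ≤ 3 * (1 + R ^ 2) * |u - v| := by
  rw [one_add_sq_rpow_three_halves, one_add_sq_rpow_three_halves]
  have hR : ∀ w, |w| ≤ R → |√(1 + w ^ 2)| ≤ √(1 + R ^ 2) := fun w hw => by
    rw [abs_of_nonneg (Real.sqrt_nonneg _)]
    exact Real.sqrt_le_sqrt (by nlinarith [sq_le_sq' (abs_le.1 hw).1 (abs_le.1 hw).2])
  calc _ ≤ 3 * √(1 + R ^ 2) ^ 2 * |√(1 + u ^ 2) - √(1 + v ^ 2)| :=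
        abs_cube_sub_le (hR u hu) (hR v hv)
    _ ≤ 3 * (1 + R ^ 2) * |u - v| := by
        rw [Real.sq_sqrt (by positivity)]
        exact mul_le_mul_of_nonneg_left (abs_sqrt_one_add_sq_sub_le u v) (by positivity)

lemma abs_zpow_mul_integral_le {n : ℕ} (hn : 2 ≤ n) {g : ℝ → ℝ} {A y : ℝ} (hy : 0 < y)
    (hg : ∀ η ∈ Ioc 0 y, |g η| ≤ (n - 1) * A * η ^ (n - 2)) :
    |y ^ (2 - (n:ℤ)) * ∫ η in 0..y, g η| ≤ A * y := by
  have hcast : ((n - 2 : ℕ) : ℝ) + 1 = n - 1 := by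
    rw [Nat.cast_sub hn]; push_cast; ring
  have hbound : ∫ η in 0..y, (n - 1) * A * η ^ (n - 2) = A * y ^ (n - 1) := by
    rw [intervalIntegral.integral_const_mul, integral_pow, hcast,
      show n - 2 + 1 = n - 1 by omega]
    have : (n:ℝ) - 1 ≠ 0 := by
      have : (2:ℝ) ≤ n := by exact_mod_cast hn
      linarith
    rw [zero_pow (by omega), sub_zero]
    field_simp
  have hpow : y ^ (2 - (n:ℤ)) * y ^ (n - 1) = y := by
    rw [← zpow_natCast, ← zpow_add₀ hy.ne', show 2 - (n:ℤ) + (n - 1 : ℕ) = 1 by omega,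
      zpow_one]
  have hint : |∫ η in 0..y, g η| ≤ A * y ^ (n - 1) := by
    rw [← hbound, ← Real.norm_eq_abs]
    refine intervalIntegral.norm_integral_le_of_norm_le hy.le (ae_of_all _ hg) ?_
    exact (continuous_const.mul (continuous_pow _)).intervalIntegrable _ _
  rw [abs_mul, abs_of_pos (zpow_pos hy _)]
  calc _ ≤ y ^ (2 - (n:ℤ)) * (A * y ^ (n - 1)) := by gcongr
    _ = A * y := by rw [mul_left_comm, hpow]

noncomputable def integrand (n : ℕ) (Ht q : ℝ → ℝ) (η : ℝ) : ℝ :=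
  (-((n:ℝ) - 2) * q η ^ 3 + ((n:ℝ) - 1) * Ht η * η * (1 + q η ^ 2) ^ ((3:ℝ)/2)) * η ^ (n - 3)

section Integrand

variable {n : ℕ} {Ht q q₁ q₂ : ℝ → ℝ} {M η : ℝ}

lemma pow_sub_two_eq (hn : 3 ≤ n) : η ^ (n - 2) = η * η ^ (n - 3) := by
  rw [← pow_succ']; congr 1; omega

lemma integrand_eq_add (hn : 3 ≤ n) (η : ℝ) : integrand n Ht q η =
    -((n:ℝ) - 2) * (q η ^ 3 * η ^ (n - 3))
      + ((n:ℝ) - 1) * (Ht η * (1 + q η ^ 2) ^ ((3:ℝ)/2)) * η ^ (n - 2) := by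
  rw [integrand, pow_sub_two_eq hn]
  ring

lemma abs_integrand_le (hn : 3 ≤ n) (hη : 0 < η) (hH : 4 * |Ht η| ≤ M)
    (hq : |q η| ≤ M * η) (hMη : M * η ≤ 1 / 4) :
    |integrand n Ht q η| ≤ (n - 1) * M * η ^ (n - 2) := by
  have hn' : (3:ℝ) ≤ n := by exact_mod_cast hn
  have hP : 0 ≤ η ^ (n - 2) := by positivity
  have hMη0 : 0 ≤ M * η := (abs_nonneg _).trans hq
  have hM : 0 ≤ M := nonneg_of_mul_nonneg_left hMη0 hη
  have hcube : |q η ^ 3 * η ^ (n - 3)| ≤ M / 16 * η ^ (n - 2) := by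
    rw [abs_mul, abs_pow, abs_of_pos (pow_pos hη _), pow_sub_two_eq hn]
    calc |q η| ^ 3 * η ^ (n - 3) ≤ (M * η) ^ 2 * M * η * η ^ (n - 3) := by
          gcongr; exact (pow_le_pow_left₀ (abs_nonneg _) hq 3).trans_eq (by ring)
      _ ≤ 1 / 16 * M * η * η ^ (n - 3) := by gcongr; nlinarith
      _ = M / 16 * (η * η ^ (n - 3)) := by ring
  have hcurv : |Ht η * (1 + q η ^ 2) ^ ((3:ℝ)/2)| ≤ |Ht η| * (289 / 256) := by
    rw [abs_mul, abs_of_pos (by positivity : (0:ℝ) < (1 + q η ^ 2) ^ ((3:ℝ)/2))]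
    have := one_add_sq_rpow_le (hq.trans hMη)
    gcongr
    linarith
  rw [integrand_eq_add hn]
  set X := q η ^ 3 * η ^ (n - 3)
  set Y := Ht η * (1 + q η ^ 2) ^ ((3:ℝ)/2)
  set P := η ^ (n - 2)
  have hn2 : (0:ℝ) ≤ n - 2 := by linarith
  have hn1 : (0:ℝ) ≤ n - 1 := by linarith
  calc _ ≤ |-((n:ℝ) - 2) * X| + |((n:ℝ) - 1) * Y * P| := abs_add_le _ _
    _ = ((n:ℝ) - 2) * |X| + ((n:ℝ) - 1) * |Y| * P := by
      simp only [abs_mul, abs_neg, abs_of_nonneg hn2, abs_of_nonneg hn1, abs_of_nonneg hP]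
    _ ≤ ((n:ℝ) - 2) * (M / 16 * P) + ((n:ℝ) - 1) * (|Ht η| * (289 / 256)) * P := by gcongr
    _ ≤ (n - 1) * M * P := by
      nlinarith [mul_nonneg (mul_nonneg hn1 hP) (sub_nonneg.2 hH),
        mul_nonneg (mul_nonneg hn1 hP) hM, mul_nonneg hM hP]

lemma abs_integrand_sub_le (hn : 3 ≤ n) (hη : 0 < η) (hH : 4 * |Ht η| ≤ M)
    (hq₁ : |q₁ η| ≤ M * η) (hq₂ : |q₂ η| ≤ M * η) (hMη : M * η ≤ 1 / 4) {d : ℝ}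
    (hd : |q₁ η - q₂ η| ≤ d * η) :
    |integrand n Ht q₁ η - integrand n Ht q₂ η| ≤ (n - 1) * (d / 2) * η ^ (n - 2) := by
  have hn' : (3:ℝ) ≤ n := by exact_mod_cast hn
  have hd0 : 0 ≤ d := nonneg_of_mul_nonneg_left ((abs_nonneg _).trans hd) hη
  have hP : 0 ≤ η ^ (n - 2) := by positivity
  have hcube : |(q₁ η ^ 3 - q₂ η ^ 3) * η ^ (n - 3)| ≤ 3 / 16 * d * η ^ (n - 2) := by
    rw [abs_mul, abs_of_pos (pow_pos hη _), pow_sub_two_eq hn]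
    calc |q₁ η ^ 3 - q₂ η ^ 3| * η ^ (n - 3) ≤ 3 * (M * η) ^ 2 * (d * η) * η ^ (n - 3) := by
          gcongr
          exact (abs_cube_sub_le hq₁ hq₂).trans (by gcongr)
      _ ≤ 3 * (1 / 4) ^ 2 * (d * η) * η ^ (n - 3) := by
          gcongr; exact (abs_nonneg _).trans hq₁
      _ = 3 / 16 * d * (η * η ^ (n - 3)) := by ring
  have hcurv : |Ht η * ((1 + q₁ η ^ 2) ^ ((3:ℝ)/2) - (1 + q₂ η ^ 2) ^ ((3:ℝ)/2))|
      ≤ 51 / 256 * d := by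
    rw [abs_mul]
    calc _ ≤ |Ht η| * (3 * (1 + (1 / 4) ^ 2) * (d * η)) := by
          gcongr
          exact (abs_one_add_sq_rpow_sub_le (hq₁.trans hMη) (hq₂.trans hMη)).trans (by gcongr)
      _ = 51 / 16 * d * (|Ht η| * η) := by ring
      _ ≤ 51 / 16 * d * (1 / 16) := by gcongr; nlinarith [abs_nonneg (Ht η)]
      _ = 51 / 256 * d := by ring
  have hdiff : integrand n Ht q₁ η - integrand n Ht q₂ η =
      -((n:ℝ) - 2) * ((q₁ η ^ 3 - q₂ η ^ 3) * η ^ (n - 3)) + ((n:ℝ) - 1) *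
        (Ht η * ((1 + q₁ η ^ 2) ^ ((3:ℝ)/2) - (1 + q₂ η ^ 2) ^ ((3:ℝ)/2))) * η ^ (n - 2) := by
    rw [integrand_eq_add hn, integrand_eq_add hn]; ring
  rw [hdiff]
  set X := (q₁ η ^ 3 - q₂ η ^ 3) * η ^ (n - 3)
  set Y := Ht η * ((1 + q₁ η ^ 2) ^ ((3:ℝ)/2) - (1 + q₂ η ^ 2) ^ ((3:ℝ)/2))
  set P := η ^ (n - 2)
  have hn2 : (0:ℝ) ≤ n - 2 := by linarith
  have hn1 : (0:ℝ) ≤ n - 1 := by linarith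
  calc _ ≤ |-((n:ℝ) - 2) * X| + |((n:ℝ) - 1) * Y * P| := abs_add_le _ _
    _ = ((n:ℝ) - 2) * |X| + ((n:ℝ) - 1) * |Y| * P := by
      simp only [abs_mul, abs_neg, abs_of_nonneg hn2, abs_of_nonneg hn1, abs_of_nonneg hP]
    _ ≤ ((n:ℝ) - 2) * (3 / 16 * d * P) + ((n:ℝ) - 1) * (51 / 256 * d) * P := by gcongr
    _ ≤ (n - 1) * (d / 2) * P := by
      nlinarith [mul_nonneg (mul_nonneg hn1 hP) hd0, mul_nonneg hd0 hP]

end Integrand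

lemma aemeasurable_add_mul_iff {α : Type*} [MeasurableSpace α] {μ : Measure α}
    {a b h : α → ℝ} (ha : AEMeasurable a μ) (hb : AEMeasurable b μ) (hb0 : ∀ᵐ x ∂μ, b x ≠ 0) :
    AEMeasurable (fun x => a x + h x * b x) μ ↔ AEMeasurable h μ := by
  refine ⟨fun hf => ((hf.sub ha).mul hb.inv).congr ?_, fun hh => ha.add (hh.mul hb)⟩
  filter_upwards [hb0] with x hx
  simp [hx]

lemma aemeasurable_integrand_iff {n : ℕ} (hn : 2 ≤ n) {Ht q : ℝ → ℝ} {y : ℝ}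
    (hq : ContinuousOn q (Ioc 0 y)) :
    AEMeasurable (integrand n Ht q) (volume.restrict (Ioc 0 y)) ↔
      AEMeasurable Ht (volume.restrict (Ioc 0 y)) := by
  have hq' : AEMeasurable q (volume.restrict (Ioc 0 y)) := hq.aemeasurable measurableSet_Ioc
  have hn1 : (n:ℝ) - 1 ≠ 0 := by
    have : (2:ℝ) ≤ n := by exact_mod_cast hn
    linarith
  have hdecomp : integrand n Ht q = fun η => -((n:ℝ) - 2) * q η ^ 3 * η ^ (n - 3)
      + Ht η * (((n:ℝ) - 1) * η * (1 + q η ^ 2) ^ ((3:ℝ)/2) * η ^ (n - 3)) := by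
    funext η; rw [integrand]; ring
  rw [hdecomp]
  refine aemeasurable_add_mul_iff (by fun_prop) (by fun_prop) ?_
  refine ae_restrict_of_forall_mem measurableSet_Ioc fun η hη => ?_
  have := hη.1
  positivity

noncomputable def rhs (n : ℕ) (Ht q : ℝ → ℝ) (y : ℝ) : ℝ :=
  y ^ (2 - (n:ℤ)) * ∫ η in (0:ℝ)..y, integrand n Ht q η

def IsSolution (n : ℕ) (Ht : ℝ → ℝ) (M Y₁ : ℝ) (q : ℝ → ℝ) : Prop :=
  ContinuousOn q (Ioc 0 Y₁) ∧ (∀ y ∈ Ioc (0:ℝ) Y₁, |q y / y| ≤ M) ∧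
    ∀ y ∈ Ioc (0:ℝ) Y₁, q y = rhs n Ht q y

lemma rhs_congr {n : ℕ} {Ht q₁ q₂ : ℝ → ℝ} {y : ℝ} (hy : 0 ≤ y) (h : EqOn q₁ q₂ (Ioc 0 y)) :
    rhs n Ht q₁ y = rhs n Ht q₂ y := by
  refine congrArg _ (intervalIntegral.integral_congr_ae (ae_of_all _ fun η hη => ?_))
  rw [uIoc_of_le hy] at hη
  simp only [integrand, h hη]

lemma continuousOn_rhs {n : ℕ} {Ht q : ℝ → ℝ} {Y₁ : ℝ}
    (hint : IntegrableOn (integrand n Ht q) (Ioc 0 Y₁)) :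
    ContinuousOn (rhs n Ht q) (Ioc 0 Y₁) := by
  intro y hy
  have hY₁ : 0 ≤ Y₁ := hy.1.le.trans hy.2
  rw [← integrableOn_Icc_iff_integrableOn_Ioc, ← uIcc_of_le hY₁] at hint
  have hprim := (intervalIntegral.continuousOn_primitive_interval hint).mono
    (Ioc_subset_Icc_self.trans Icc_subset_uIcc)
  have hzpow : ContinuousOn (fun y : ℝ => y ^ (2 - (n:ℤ))) (Ioc 0 Y₁) :=
    fun y hy => (continuousAt_zpow₀ y _ (Or.inl hy.1.ne')).continuousWithinAt
  exact hzpow.mul hprim y hy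

lemma rhs_eq_zero {n : ℕ} (hn : 2 ≤ n) {Ht q : ℝ → ℝ} {Y₁ y : ℝ} (hy : y ∈ Ioc 0 Y₁)
    (hHt : ¬ AEMeasurable Ht (volume.restrict (Ioc 0 y))) (hq : ContinuousOn q (Ioc 0 Y₁)) :
    rhs n Ht q y = 0 := by
  refine mul_eq_zero_of_right _ (intervalIntegral.integral_undef fun hint => hHt ?_)
  rw [intervalIntegrable_iff_integrableOn_Ioc_of_le hy.1.le] at hint
  exact (aemeasurable_integrand_iff hn (hq.mono (Ioc_subset_Ioc_right hy.2))).1 hint.aemeasurable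

theorem exists_isSolution_eqOn_of_not_aemeasurable {n : ℕ} (hn : 2 ≤ n) {Ht : ℝ → ℝ}
    {M Y₁ : ℝ} (hM : 0 ≤ M) (hHt : ∀ a > 0, ¬ AEMeasurable Ht (volume.restrict (Ioc 0 a))) :
    ∃ q, IsSolution n Ht M Y₁ q ∧ ∀ q', IsSolution n Ht M Y₁ q' → EqOn q q' (Ioc 0 Y₁) := by
  refine ⟨0, ⟨continuousOn_const, fun _ _ => by simpa using hM, fun y hy => ?_⟩,
    fun q' ⟨hq', _, heq⟩ y hy => ?_⟩
  · exact (rhs_eq_zero hn hy (hHt y hy.1) continuousOn_const).symm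
  · rw [heq y hy, rhs_eq_zero hn hy (hHt y hy.1) hq']
    rfl

section Rescaling

variable {Y₁ : ℝ}

-- The inverse of the isometry `q ↦ q / y` from `X_{Y₁}` onto the bounded continuous functions
-- on `(0, Y₁]`.
noncomputable def unscale (r : Ioc (0:ℝ) Y₁ →ᵇ ℝ) (η : ℝ) : ℝ :=
  if h : η ∈ Ioc 0 Y₁ then η * r ⟨η, h⟩ else 0

lemma unscale_of_mem (r : Ioc (0:ℝ) Y₁ →ᵇ ℝ) {η : ℝ} (hη : η ∈ Ioc 0 Y₁) :
    unscale r η = η * r ⟨η, hη⟩ :=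
  dif_pos hη

lemma continuousOn_unscale (r : Ioc (0:ℝ) Y₁ →ᵇ ℝ) : ContinuousOn (unscale r) (Ioc 0 Y₁) := by
  rw [continuousOn_iff_continuous_domRestrict]
  convert continuous_subtype_val.mul r.continuous
  funext η
  exact unscale_of_mem r η.2

lemma abs_unscale_sub_le (r s : Ioc (0:ℝ) Y₁ →ᵇ ℝ) {η : ℝ} (hη : η ∈ Ioc 0 Y₁) :
    |unscale r η - unscale s η| ≤ dist r s * η := by
  rw [unscale_of_mem r hη, unscale_of_mem s hη, ← mul_sub, abs_mul, abs_of_pos hη.1, mul_comm,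
    ← Real.dist_eq]
  exact mul_le_mul_of_nonneg_right (r.dist_coe_le_dist _) hη.1.le

lemma abs_unscale_le (r : Ioc (0:ℝ) Y₁ →ᵇ ℝ) {η : ℝ} (hη : η ∈ Ioc 0 Y₁) :
    |unscale r η| ≤ ‖r‖ * η := by
  simpa [unscale, dist_zero_right] using abs_unscale_sub_le r 0 hη

end Rescaling

section Contraction

variable {n : ℕ} {Ht : ℝ → ℝ} {M Y₁ : ℝ} {r s : Ioc (0:ℝ) Y₁ →ᵇ ℝ}

lemma abs_integrand_unscale_le (hn : 3 ≤ n) (hH : ∀ η ∈ Ioc 0 Y₁, 4 * |Ht η| ≤ M)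
    (hMY : M * Y₁ ≤ 1 / 4) (hr : ‖r‖ ≤ M) {η : ℝ} (hη : η ∈ Ioc 0 Y₁) :
    |integrand n Ht (unscale r) η| ≤ (n - 1) * M * η ^ (n - 2) := by
  have hM : 0 ≤ M := (norm_nonneg r).trans hr
  exact abs_integrand_le hn hη.1 (hH η hη)
    ((abs_unscale_le r hη).trans (by gcongr; exact hη.1.le))
    ((mul_le_mul_of_nonneg_left hη.2 hM).trans hMY)

lemma integrableOn_integrand_unscale (hn : 3 ≤ n) (hH : ∀ η ∈ Ioc 0 Y₁, 4 * |Ht η| ≤ M)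
    (hMY : M * Y₁ ≤ 1 / 4) (hmeas : AEMeasurable Ht (volume.restrict (Ioc 0 Y₁)))
    (hr : ‖r‖ ≤ M) :
    IntegrableOn (integrand n Ht (unscale r)) (Ioc 0 Y₁) := by
  have hM : 0 ≤ M := (norm_nonneg r).trans hr
  have hn' : (1:ℝ) ≤ n := by exact_mod_cast (by omega : 1 ≤ n)
  refine IntegrableOn.of_bound measure_Ioc_lt_top
    ((aemeasurable_integrand_iff (by omega) (continuousOn_unscale r)).2 hmeas).aestronglyMeasurable
    ((n - 1) * M * Y₁ ^ (n - 2)) (ae_restrict_of_forall_mem measurableSet_Ioc fun η hη => ?_)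
  rw [Real.norm_eq_abs]
  refine (abs_integrand_unscale_le hn hH hMY hr hη).trans ?_
  have : 0 ≤ ((n:ℝ) - 1) * M := mul_nonneg (by linarith) hM
  gcongr
  exacts [hη.1.le, hη.2]

lemma abs_rhs_unscale_le (hn : 3 ≤ n) (hH : ∀ η ∈ Ioc 0 Y₁, 4 * |Ht η| ≤ M)
    (hMY : M * Y₁ ≤ 1 / 4) (hr : ‖r‖ ≤ M) {y : ℝ} (hy : y ∈ Ioc 0 Y₁) :
    |rhs n Ht (unscale r) y / y| ≤ M := by
  rw [abs_div, abs_of_pos hy.1, div_le_iff₀ hy.1]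
  exact abs_zpow_mul_integral_le (by omega) hy.1 fun η hη =>
    abs_integrand_unscale_le hn hH hMY hr ⟨hη.1, hη.2.trans hy.2⟩

lemma abs_rhs_unscale_sub_le (hn : 3 ≤ n) (hH : ∀ η ∈ Ioc 0 Y₁, 4 * |Ht η| ≤ M)
    (hMY : M * Y₁ ≤ 1 / 4) (hmeas : AEMeasurable Ht (volume.restrict (Ioc 0 Y₁)))
    (hr : ‖r‖ ≤ M) (hs : ‖s‖ ≤ M) {y : ℝ} (hy : y ∈ Ioc 0 Y₁) :
    |rhs n Ht (unscale r) y / y - rhs n Ht (unscale s) y / y| ≤ dist r s / 2 := by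
  rw [← sub_div, abs_div, abs_of_pos hy.1, div_le_iff₀ hy.1]
  have hM : 0 ≤ M := (norm_nonneg r).trans hr
  have hint : ∀ {t : Ioc (0:ℝ) Y₁ →ᵇ ℝ}, ‖t‖ ≤ M →
      IntervalIntegrable (integrand n Ht (unscale t)) volume 0 y := fun ht =>
    (intervalIntegrable_iff_integrableOn_Ioc_of_le hy.1.le).2
      ((integrableOn_integrand_unscale hn hH hMY hmeas ht).mono_set (Ioc_subset_Ioc_right hy.2))
  rw [rhs, rhs, ← mul_sub, ← intervalIntegral.integral_sub (hint hr) (hint hs)]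
  refine abs_zpow_mul_integral_le (by omega) hy.1 fun η hη => ?_
  have hη' : η ∈ Ioc 0 Y₁ := ⟨hη.1, hη.2.trans hy.2⟩
  have hMη : M * η ≤ 1 / 4 := (mul_le_mul_of_nonneg_left hη'.2 hM).trans hMY
  exact abs_integrand_sub_le hn hη.1 (hH η hη')
    ((abs_unscale_le r hη').trans (by gcongr; exact hη.1.le))
    ((abs_unscale_le s hη').trans (by gcongr; exact hη.1.le)) hMη (abs_unscale_sub_le r s hη')

end Contraction

section FixedPoint

variable {n : ℕ} {Ht : ℝ → ℝ} {M Y₁ : ℝ}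

noncomputable def picardMap (hn : 3 ≤ n) (hH : ∀ η ∈ Ioc 0 Y₁, 4 * |Ht η| ≤ M)
    (hMY : M * Y₁ ≤ 1 / 4) (hmeas : AEMeasurable Ht (volume.restrict (Ioc 0 Y₁)))
    (r : Metric.closedBall (0 : Ioc (0:ℝ) Y₁ →ᵇ ℝ) M) :
    Metric.closedBall (0 : Ioc (0:ℝ) Y₁ →ᵇ ℝ) M :=
  have hr : ‖r.1‖ ≤ M := mem_closedBall_zero_iff.1 r.2
  have hbound : ∀ y : Ioc (0:ℝ) Y₁, ‖rhs n Ht (unscale r.1) y / y‖ ≤ M := fun y =>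
    abs_rhs_unscale_le hn hH hMY hr y.2
  ⟨.ofNormedAddCommGroup _
    ((continuousOn_rhs (integrableOn_integrand_unscale hn hH hMY hmeas hr)).div continuousOn_id
      fun _ hy => hy.1.ne').domRestrict M hbound,
    mem_closedBall_zero_iff.2 (BoundedContinuousFunction.norm_ofNormedAddCommGroup_le _
      ((norm_nonneg _).trans hr) hbound)⟩

lemma picardMap_apply (hn : 3 ≤ n) (hH : ∀ η ∈ Ioc 0 Y₁, 4 * |Ht η| ≤ M)
    (hMY : M * Y₁ ≤ 1 / 4) (hmeas : AEMeasurable Ht (volume.restrict (Ioc 0 Y₁)))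
    (r : Metric.closedBall (0 : Ioc (0:ℝ) Y₁ →ᵇ ℝ) M) (y : Ioc (0:ℝ) Y₁) :
    (picardMap hn hH hMY hmeas r).1 y = rhs n Ht (unscale r.1) y / y :=
  rfl

lemma contractingWith_picardMap (hn : 3 ≤ n) (hH : ∀ η ∈ Ioc 0 Y₁, 4 * |Ht η| ≤ M)
    (hMY : M * Y₁ ≤ 1 / 4) (hmeas : AEMeasurable Ht (volume.restrict (Ioc 0 Y₁))) :
    ContractingWith (1 / 2) (picardMap hn hH hMY hmeas) := by
  refine ⟨by norm_num, LipschitzWith.of_dist_le_mul fun r s => ?_⟩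
  rw [Subtype.dist_eq, Subtype.dist_eq, NNReal.coe_div, NNReal.coe_one, NNReal.coe_two,
    BoundedContinuousFunction.dist_le (by positivity)]
  intro y
  rw [Real.dist_eq, picardMap_apply, picardMap_apply, div_mul_eq_mul_div, one_mul]
  exact abs_rhs_unscale_sub_le hn hH hMY hmeas (mem_closedBall_zero_iff.1 r.2)
    (mem_closedBall_zero_iff.1 s.2) y.2

lemma isSolution_unscale_of_isFixedPt (hn : 3 ≤ n) (hH : ∀ η ∈ Ioc 0 Y₁, 4 * |Ht η| ≤ M)
    (hMY : M * Y₁ ≤ 1 / 4) (hmeas : AEMeasurable Ht (volume.restrict (Ioc 0 Y₁)))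
    {r : Metric.closedBall (0 : Ioc (0:ℝ) Y₁ →ᵇ ℝ) M}
    (hr : Function.IsFixedPt (picardMap hn hH hMY hmeas) r) :
    IsSolution n Ht M Y₁ (unscale r.1) := by
  refine ⟨continuousOn_unscale _, fun y hy => ?_, fun y hy => ?_⟩
  · rw [unscale_of_mem _ hy, mul_div_cancel_left₀ _ hy.1.ne', ← Real.norm_eq_abs]
    exact (r.1.norm_coe_le_norm _).trans (mem_closedBall_zero_iff.1 r.2)
  · have hry : rhs n Ht (unscale r.1) y / y = r.1 ⟨y, hy⟩ :=
      congrArg (fun t : Metric.closedBall (0 : Ioc (0:ℝ) Y₁ →ᵇ ℝ) M => t.1 ⟨y, hy⟩) hr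
    rw [unscale_of_mem _ hy, ← hry, mul_div_cancel₀ _ hy.1.ne']

lemma exists_isFixedPt_of_isSolution (hn : 3 ≤ n) (hM : 0 ≤ M)
    (hH : ∀ η ∈ Ioc 0 Y₁, 4 * |Ht η| ≤ M)
    (hMY : M * Y₁ ≤ 1 / 4) (hmeas : AEMeasurable Ht (volume.restrict (Ioc 0 Y₁)))
    {q : ℝ → ℝ} (hq : IsSolution n Ht M Y₁ q) :
    ∃ r, Function.IsFixedPt (picardMap hn hH hMY hmeas) r ∧ EqOn (unscale r.1) q (Ioc 0 Y₁) := by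
  obtain ⟨hcont, hbound, heq⟩ := hq
  let r : Ioc (0:ℝ) Y₁ →ᵇ ℝ := .ofNormedAddCommGroup (fun y => q y / y)
    (hcont.div continuousOn_id fun _ hy => hy.1.ne').domRestrict M fun y => hbound y y.2
  have hrq : EqOn (unscale r) q (Ioc 0 Y₁) := fun y hy => by
    rw [unscale_of_mem r hy]
    exact mul_div_cancel₀ _ hy.1.ne'
  refine ⟨⟨r, mem_closedBall_zero_iff.2 (BoundedContinuousFunction.norm_ofNormedAddCommGroup_le _
    hM _)⟩, Subtype.ext (BoundedContinuousFunction.ext fun y => ?_), hrq⟩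
  rw [picardMap_apply, rhs_congr y.2.1.le (hrq.mono (Ioc_subset_Ioc_right y.2.2)), ← heq y y.2]
  rfl

theorem exists_isSolution_eqOn (hn : 3 ≤ n) (hM : 0 ≤ M) (hH : ∀ η ∈ Ioc 0 Y₁, 4 * |Ht η| ≤ M)
    (hMY : M * Y₁ ≤ 1 / 4) (hmeas : AEMeasurable Ht (volume.restrict (Ioc 0 Y₁))) :
    ∃ q, IsSolution n Ht M Y₁ q ∧ ∀ q', IsSolution n Ht M Y₁ q' → EqOn q q' (Ioc 0 Y₁) := by
  have hΦ := contractingWith_picardMap hn hH hMY hmeas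
  have : Nonempty (Metric.closedBall (0 : Ioc (0:ℝ) Y₁ →ᵇ ℝ) M) :=
    ⟨⟨0, Metric.mem_closedBall_self hM⟩⟩
  have : CompleteSpace (Metric.closedBall (0 : Ioc (0:ℝ) Y₁ →ᵇ ℝ) M) :=
    Metric.isClosed_closedBall.completeSpace_coe
  refine ⟨unscale (hΦ.fixedPoint _).1,
    isSolution_unscale_of_isFixedPt hn hH hMY hmeas hΦ.fixedPoint_isFixedPt, fun q' hq' => ?_⟩
  obtain ⟨r, hr, hrq⟩ := exists_isFixedPt_of_isSolution hn hM hH hMY hmeas hq'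
  rwa [← hΦ.fixedPoint_unique hr]

end FixedPoint

end RotationalSlope

theorem stmt_0_general (n : ℕ) (hn : 3 ≤ n) (Y : ℝ) (Ht : ℝ → ℝ)
    (hHt : ∃ C : ℝ, ∀ y ∈ Set.Icc (0:ℝ) Y, |Ht y| ≤ C) :
    ∃ M₀ > (0:ℝ), ∀ M ≥ M₀, ∃ Y₂ > (0:ℝ), ∀ Y₁, 0 < Y₁ → Y₁ ≤ Y₂ → Y₁ ≤ Y →
      ∃ q : ℝ → ℝ,
        (ContinuousOn q (Set.Ioc 0 Y₁) ∧
          (∀ y ∈ Set.Ioc (0:ℝ) Y₁, |q y / y| ≤ M) ∧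
          (∀ y ∈ Set.Ioc (0:ℝ) Y₁,
            q y = y ^ (2 - (n:ℤ)) *
              ∫ η in (0:ℝ)..y,
                (-((n:ℝ) - 2) * q η ^ 3
                  + ((n:ℝ) - 1) * Ht η * η * (1 + q η ^ 2) ^ ((3:ℝ)/2)) * η ^ (n - 3))) ∧
        (∀ q' : ℝ → ℝ,
          (ContinuousOn q' (Set.Ioc 0 Y₁) ∧
            (∀ y ∈ Set.Ioc (0:ℝ) Y₁, |q' y / y| ≤ M) ∧
            (∀ y ∈ Set.Ioc (0:ℝ) Y₁,
              q' y = y ^ (2 - (n:ℤ)) *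
                ∫ η in (0:ℝ)..y,
                  (-((n:ℝ) - 2) * q' η ^ 3
                    + ((n:ℝ) - 1) * Ht η * η * (1 + q' η ^ 2) ^ ((3:ℝ)/2)) * η ^ (n - 3))) →
          Set.EqOn q q' (Set.Ioc 0 Y₁)) := by
  obtain ⟨C, hC⟩ := hHt
  by_cases hmeas : ∃ a > 0, AEMeasurable Ht (volume.restrict (Ioc 0 a))
  · obtain ⟨a, ha, hmeas⟩ := hmeas
    refine ⟨max (4 * C) 1, by positivity, fun M hM => ?_⟩
    have hM0 : 0 < M := lt_of_lt_of_le (by positivity) hM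
    refine ⟨min a (1 / (4 * M)), by positivity, fun Y₁ _ hY₁₂ hY₁Y => ?_⟩
    refine RotationalSlope.exists_isSolution_eqOn hn hM0.le (fun η hη => ?_) ?_
      (hmeas.mono_measure (Measure.restrict_mono_set _
        (Ioc_subset_Ioc_right (hY₁₂.trans (min_le_left _ _)))))
    · have := hC η ⟨hη.1.le, hη.2.trans hY₁Y⟩
      linarith [le_max_left (4 * C) 1]
    · have := hY₁₂.trans (min_le_right _ _)
      rw [le_div_iff₀ (by positivity)] at this
      linarith
  · push Not at hmeas
    exact ⟨1, one_pos, fun M hM => ⟨1, one_pos, fun Y₁ _ _ _ =>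
      RotationalSlope.exists_isSolution_eqOn_of_not_aemeasurable (by omega) (by linarith) hmeas⟩⟩

/-- Existence and uniqueness of a solution to the singular integral equation for the slope
`q = x'/y'` of the generating curve of a rotational hypersurface of `O(n-1)`-type, in the class
`X_{Y,M} = {q ∈ C(0,Y] : sup |q(y)/y| ≤ M}`, for sufficiently large `M` and small `Y`. -/
theorem stmt_0 (n : ℕ) (hn : 3 ≤ n) (Y : ℝ) (hY : 0 < Y) (Ht : ℝ → ℝ)
    (hHt : ∃ C : ℝ, ∀ y ∈ Set.Icc (0:ℝ) Y, |Ht y| ≤ C) :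
    ∃ M₀ > (0:ℝ), ∀ M ≥ M₀, ∃ Y₂ > (0:ℝ), ∀ Y₁, 0 < Y₁ → Y₁ ≤ Y₂ → Y₁ ≤ Y →
      ∃ q : ℝ → ℝ,
        (ContinuousOn q (Set.Ioc 0 Y₁) ∧
          (∀ y ∈ Set.Ioc (0:ℝ) Y₁, |q y / y| ≤ M) ∧
          (∀ y ∈ Set.Ioc (0:ℝ) Y₁,
            q y = y ^ (2 - (n:ℤ)) *
              ∫ η in (0:ℝ)..y,
                (-((n:ℝ) - 2) * q η ^ 3
                  + ((n:ℝ) - 1) * Ht η * η * (1 + q η ^ 2) ^ ((3:ℝ)/2)) * η ^ (n - 3))) ∧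
        (∀ q' : ℝ → ℝ,
          (ContinuousOn q' (Set.Ioc 0 Y₁) ∧
            (∀ y ∈ Set.Ioc (0:ℝ) Y₁, |q' y / y| ≤ M) ∧
            (∀ y ∈ Set.Ioc (0:ℝ) Y₁,
              q' y = y ^ (2 - (n:ℤ)) *
                ∫ η in (0:ℝ)..y,
                  (-((n:ℝ) - 2) * q' η ^ 3
                    + ((n:ℝ) - 1) * Ht η * η * (1 + q' η ^ 2) ^ ((3:ℝ)/2)) * η ^ (n - 3))) →
          Set.EqOn q q' (Set.Ioc 0 Y₁)) :=
  stmt_0_general n hn Y Ht hHt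
end

section
/- Let n ≥ 3 and let H : ℝ → ℝ be absolutely continuous with H(0) > 0, H'(s) ≥ 0 for a.e. s > 0 and H'(s) ≤ 0 for a.e. s < 0. Let (x_c, y_c) be the unit-speed solution of the rotational hypersurface equation (n-1)H = (n-2) x'/y + x''y' - x'y'' with x_c(0)=0, y_c(0)=c, x_c'(0)=1, y_c'(0)=0. If c > 1/H(0), then y_c(s) > 0 for all s ∈ ℝ. -/
/-!
While `y > 0`, the equation and unit speed give the conservation law
`(y ^ (n-2) * x')' = H * (y ^ (n-1))'`. As `H` is nondecreasing on `[0, ∞)` and `y ^ (n-1) ≥ 0`,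
integrating by parts shows that `y ^ (n-2) * x' - H * y ^ (n-1)` is nonincreasing up to the
first zero `s₀` of `y`. It vanishes at `s₀`, but equals `c ^ (n-2) * (1 - H 0 * c) < 0` at `0`.
Negative parameters follow by reversing the curve, which swaps the monotonicity assumptions
on `H`.
-/

open Set Filter Topology

theorem antitoneOn_sub_mul_of_hasDerivWithinAt {a b : ℝ} {f G G' H : ℝ → ℝ}
    (hf : ContinuousOn f (Icc a b)) (hG : ContinuousOn G (Icc a b))
    (hH : ContinuousOn H (Icc a b)) (hH_mono : MonotoneOn H (Icc a b))
    (hG_nonneg : ∀ t ∈ Icc a b, 0 ≤ G t)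
    (hf' : ∀ t ∈ Ico a b, HasDerivWithinAt f (H t * G' t) (Ici t) t)
    (hG' : ∀ t ∈ Ico a b, HasDerivWithinAt G (G' t) (Ici t) t) :
    AntitoneOn (fun t => f t - H t * G t) (Icc a b) := by
  intro p hp q hq hpq
  have hsub : Icc p q ⊆ Icc a b := Icc_subset_Icc hp.1 hq.2
  refine image_le_of_liminf_slope_right_le_deriv_boundary (f := fun t => f t - H t * G t)
    (B := fun _ => f p - H p * G p) (B' := 0) ((hf.sub (hH.mul hG)).mono hsub) le_rfl
    continuousOn_const (fun _ _ => hasDerivWithinAt_const _ _ _) ?_ ⟨hpq, le_rfl⟩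
  intro x hx r hr
  have hxab : x ∈ Ico a b := ⟨hp.1.trans hx.1, hx.2.trans_le hq.2⟩
  -- Freezing `H` at `x` gives a function with right derivative `0`; unfreezing only subtracts
  -- `(H z - H x) * G z ≥ 0`.
  have hfrozen : HasDerivWithinAt (fun z => f z - H x * G z) 0 (Ici x) x := by
    simpa using (hf' x hxab).fun_sub ((hG' x hxab).const_mul (H x))
  refine Eventually.frequently ?_
  filter_upwards [hfrozen.Ioi_of_Ici.limsup_slope_le' (lt_irrefl x) hr,
    Ioo_mem_nhdsGT hx.2] with z hz hzq
  have hz_ab : z ∈ Icc a b := hsub ⟨hx.1.trans hzq.1.le, hzq.2.le⟩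
  have hx_ab : x ∈ Icc a b := Ico_subset_Icc_self hxab
  have hHG : 0 ≤ (H z - H x) * G z :=
    mul_nonneg (sub_nonneg.2 (hH_mono hx_ab hz_ab hzq.1.le)) (hG_nonneg z hz_ab)
  refine lt_of_le_of_lt ?_ hz
  rw [slope_def_field, slope_def_field]
  gcongr ?_ / _
  · exact (sub_pos.2 hzq.1).le
  · linarith

theorem exists_first_zero_of_continuousOn {a b : ℝ} {y : ℝ → ℝ} (hab : a ≤ b)
    (hy : ContinuousOn y (Icc a b)) (ha : 0 < y a) (hb : y b ≤ 0) :
    ∃ s ∈ Ioc a b, y s = 0 ∧ ∀ t ∈ Ico a s, 0 < y t := by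
  set Z := Icc a b ∩ y ⁻¹' {0}
  have hZ_closed : IsClosed Z := hy.preimage_isClosed_of_isClosed isClosed_Icc isClosed_singleton
  have hZ_bdd : BddBelow Z := ⟨a, fun t ht => ht.1.1⟩
  have hzero_le : ∀ t ∈ Icc a b, y t ≤ 0 → ∃ z ∈ Z, z ≤ t := fun t ht hyt => by
    obtain ⟨z, hz, hyz⟩ := intermediate_value_Icc' ht.1 (hy.mono (Icc_subset_Icc_right ht.2))
      ⟨hyt, ha.le⟩
    exact ⟨z, ⟨⟨hz.1, hz.2.trans ht.2⟩, hyz⟩, hz.2⟩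
  obtain ⟨z, hzZ, -⟩ := hzero_le b ⟨hab, le_rfl⟩ hb
  have hmem : sInf Z ∈ Z := hZ_closed.csInf_mem ⟨z, hzZ⟩ hZ_bdd
  have hpos : ∀ t ∈ Ico a (sInf Z), 0 < y t := fun t ht => by
    by_contra! hyt
    obtain ⟨w, hwZ, hwt⟩ := hzero_le t ⟨ht.1, ht.2.le.trans hmem.1.2⟩ hyt
    exact (csInf_le hZ_bdd hwZ).not_gt (hwt.trans_lt ht.2)
  refine ⟨sInf Z, ⟨hmem.1.1.lt_of_ne fun h => ha.ne' ?_, hmem.1.2⟩, hmem.2, hpos⟩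
  rw [h]
  exact hmem.2

theorem mul_deriv_add_mul_deriv_eq_zero_of_sq_add_sq_eq_one {u v u' v' : ℝ → ℝ}
    (hu : ∀ s, HasDerivAt u (u' s) s) (hv : ∀ s, HasDerivAt v (v' s) s)
    (hunit : ∀ s, u s ^ 2 + v s ^ 2 = 1) (s : ℝ) :
    u s * u' s + v s * v' s = 0 := by
  have hderiv := ((hu s).pow 2).add ((hv s).pow 2)
  rw [show (u ^ 2 + v ^ 2) = fun _ => (1 : ℝ) from funext hunit] at hderiv
  have := (hasDerivAt_const s (1 : ℝ)).unique hderiv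
  simp only [Nat.cast_ofNat, Nat.add_one_sub_one, pow_one] at this
  linarith

theorem hasDerivAt_pow_mul_of_meanCurvature (k : ℕ) {H y x' y' x'' y'' : ℝ → ℝ} {s : ℝ}
    (hy : HasDerivAt y (y' s) s) (hx' : HasDerivAt x' (x'' s) s)
    (hunit : x' s ^ 2 + y' s ^ 2 = 1) (hortho : x' s * x'' s + y' s * y'' s = 0)
    (hys : y s ≠ 0)
    (heq : ((k : ℝ) + 2) * H s = ((k : ℝ) + 1) * x' s / y s + x'' s * y' s - x' s * y'' s) :
    HasDerivAt (fun t => y t ^ (k + 1) * x' t)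
      (H s * (((k : ℝ) + 2) * y s ^ (k + 1) * y' s)) s := by
  refine ((hy.fun_pow (k + 1)).fun_mul hx').congr_deriv ?_
  -- unit speed makes `(x'', y'')` normal to `(x', y')`, so `x'' = κ y'`, `κ = x'' y' - x' y''`
  have hcurv : x'' s = (x'' s * y' s - x' s * y'' s) * y' s := by
    linear_combination (-x'' s) * hunit + x' s * hortho
  field_simp at heq
  rw [Nat.add_sub_cancel]
  push_cast
  linear_combination (-(y s ^ k * y' s)) * heq + y s ^ (k + 1) * hcurv

theorem pos_of_nonneg_of_meanCurvature (n : ℕ) (hn : 3 ≤ n) {H y x' y' x'' y'' : ℝ → ℝ}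
    {c : ℝ}
    (hHc : ContinuousOn H (Ici 0)) (hH0 : 0 < H 0) (hmono : MonotoneOn H (Ici 0))
    (hy : ∀ s, HasDerivAt y (y' s) s)
    (hx' : ∀ s, HasDerivAt x' (x'' s) s) (hy' : ∀ s, HasDerivAt y' (y'' s) s)
    (hunit : ∀ s, x' s ^ 2 + y' s ^ 2 = 1)
    (heq : ∀ s, y s ≠ 0 →
      ((n:ℝ) - 1) * H s = ((n:ℝ) - 2) * x' s / y s + x'' s * y' s - x' s * y'' s)
    (hy0 : y 0 = c) (hx'0 : x' 0 = 1) (hc : 1 / H 0 < c) {s : ℝ} (hs : 0 ≤ s) : 0 < y s := by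
  obtain ⟨k, rfl⟩ := Nat.exists_eq_add_of_le' hn
  have hc0 : 0 < c := (one_div_pos.2 hH0).trans hc
  have hy_cont : Continuous y := continuous_iff_continuousAt.2 fun t => (hy t).continuousAt
  have hx'_cont : Continuous x' := continuous_iff_continuousAt.2 fun t => (hx' t).continuousAt
  by_contra! hys
  obtain ⟨s₀, hs₀, hys₀, hpos⟩ :=
    exists_first_zero_of_continuousOn hs hy_cont.continuousOn (hy0 ▸ hc0) hys
  have hanti : AntitoneOn (fun t => y t ^ (k + 1) * x' t - H t * y t ^ (k + 2)) (Icc 0 s₀) := by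
    refine antitoneOn_sub_mul_of_hasDerivWithinAt
      (G' := fun t => ((k : ℝ) + 2) * y t ^ (k + 1) * y' t)
      ((hy_cont.pow _).mul hx'_cont).continuousOn (hy_cont.pow _).continuousOn
      (hHc.mono Icc_subset_Ici_self) (hmono.mono Icc_subset_Ici_self) ?_ ?_ ?_
    · intro t ht
      rcases ht.2.lt_or_eq with hlt | rfl
      · exact pow_nonneg (hpos t ⟨ht.1, hlt⟩).le _
      · simp [hys₀]
    · intro t ht
      have hortho := mul_deriv_add_mul_deriv_eq_zero_of_sq_add_sq_eq_one hx' hy' hunit t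
      refine (hasDerivAt_pow_mul_of_meanCurvature k (hy t) (hx' t) (hunit t) hortho
        (hpos t ht).ne' ?_).hasDerivWithinAt
      have heq_t := heq t (hpos t ht).ne'
      push_cast at heq_t
      linear_combination heq_t
    · intro t _
      have := (hy t).fun_pow (k + 2)
      push_cast at this
      exact this.hasDerivWithinAt
  have hφ := hanti ⟨le_rfl, hs₀.1.le⟩ ⟨hs₀.1.le, le_rfl⟩ hs₀.1.le
  simp only [hys₀, hy0, hx'0, zero_pow (Nat.succ_ne_zero _), zero_mul, mul_zero, sub_self,
    mul_one] at hφ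
  have hcH : 1 < H 0 * c := by rwa [div_lt_iff₀ hH0, mul_comm] at hc
  rw [pow_succ _ (k + 1)] at hφ
  nlinarith [pow_pos hc0 (k + 1)]

theorem stmt_3_general (n : ℕ) (hn : 3 ≤ n) (H y x' y' x'' y'' : ℝ → ℝ) (c : ℝ)
    (hHc : Continuous H) (hH0 : 0 < H 0)
    (hmono : MonotoneOn H (Set.Ici 0)) (hanti : AntitoneOn H (Set.Iic 0))
    (hy : ∀ s, HasDerivAt y (y' s) s)
    (hx' : ∀ s, HasDerivAt x' (x'' s) s) (hy' : ∀ s, HasDerivAt y' (y'' s) s)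
    (hunit : ∀ s, x' s ^ 2 + y' s ^ 2 = 1)
    (heq : ∀ s, y s ≠ 0 →
      ((n:ℝ) - 1) * H s = ((n:ℝ) - 2) * x' s / y s + x'' s * y' s - x' s * y'' s)
    (hy0 : y 0 = c) (hx'0 : x' 0 = 1)
    (hc : 1 / H 0 < c) :
    ∀ s : ℝ, 0 < y s := by
  intro s
  rcases le_or_gt 0 s with hs | hs
  · exact pos_of_nonneg_of_meanCurvature n hn hHc.continuousOn hH0 hmono hy hx' hy' hunit heq
      hy0 hx'0 hc hs
  -- reversing the parameter, `t ↦ (-x (-t), y (-t))` solves the equation for `t ↦ H (-t)`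
  have hreflect : ∀ {f f' : ℝ → ℝ}, (∀ t, HasDerivAt f (f' t) t) →
      ∀ t, HasDerivAt (fun t => f (-t)) (-f' (-t)) t := fun hf t => by
    simpa [Function.comp_def] using (hf (-t)).comp t (hasDerivAt_neg t)
  simpa using pos_of_nonneg_of_meanCurvature (H := fun t => H (-t)) (y := fun t => y (-t))
    (x' := fun t => x' (-t)) (y' := fun t => -y' (-t)) (x'' := fun t => -x'' (-t))
    (y'' := fun t => y'' (-t)) n hn (hHc.comp continuous_neg).continuousOn (by simpa using hH0)
    (fun a ha b hb hab => hanti (mem_Iic.2 (neg_nonpos.2 hb))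
      (mem_Iic.2 (neg_nonpos.2 ha)) (neg_le_neg hab))
    (hreflect hy) (by simpa using hreflect hx') (fun t => by simpa using (hreflect hy' t).fun_neg)
    (fun t => by simpa using hunit (-t)) (fun t ht => by rw [heq (-t) ht]; ring)
    (by simpa using hy0) (by simpa using hx'0) (by simpa using hc) (neg_nonneg.2 hs.le)

/-- If the prescribed mean curvature `H` is continuous with `H(0) > 0`, nondecreasing on
`[0,∞)` and nonincreasing on `(-∞,0]` (the absolutely continuous formulation with
`H' ≥ 0` a.e. on `(0,∞)`, `H' ≤ 0` a.e. on `(-∞,0)`), and `c > 1/H(0)`, then the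
generating curve with `y(0) = c` stays in the upper half plane: `y_c > 0` on `ℝ`. -/
theorem stmt_3 (n : ℕ) (hn : 3 ≤ n) (H x y x' y' x'' y'' : ℝ → ℝ) (c : ℝ)
    (hHc : Continuous H) (hH0 : 0 < H 0)
    (hmono : MonotoneOn H (Set.Ici 0)) (hanti : AntitoneOn H (Set.Iic 0))
    (hx : ∀ s, HasDerivAt x (x' s) s) (hy : ∀ s, HasDerivAt y (y' s) s)
    (hx' : ∀ s, HasDerivAt x' (x'' s) s) (hy' : ∀ s, HasDerivAt y' (y'' s) s)
    (hunit : ∀ s, x' s ^ 2 + y' s ^ 2 = 1)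
    (heq : ∀ s, y s ≠ 0 →
      ((n:ℝ) - 1) * H s = ((n:ℝ) - 2) * x' s / y s + x'' s * y' s - x' s * y'' s)
    (hx0 : x 0 = 0) (hy0 : y 0 = c) (hx'0 : x' 0 = 1) (hy'0 : y' 0 = 0)
    (hc : 1 / H 0 < c) :
    ∀ s : ℝ, 0 < y s :=
  stmt_3_general n hn H y x' y' x'' y'' c hHc hH0 hmono hanti hy hx' hy' hunit heq hy0 hx'0 hc
end

section
/- Let n ≥ 3, H : ℝ → ℝ continuous, and for c > 0 let (F_c, G_c) solve F_c' = -(n-1)H G_c + (1/c){1 + (n-3)G_c²/(F_c²+G_c²)}, G_c' = (n-1)H F_c - (1/c)(n-3)F_c G_c/(F_c²+G_c²), with F_c(0)=0, G_c(0)=1, where F_c²+G_c² > 0. Let F_∞(s) = -sin η(s), G_∞(s) = cos η(s) with η(s) = (n-1)∫₀^s H(t)dt. Then (F_c(s)-F_∞(s))² + (G_c(s)-G_∞(s))² ≤ 2(n-2)² s²/c² for all s ∈ ℝ. -/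
/-!
Write `Z = G + iF` and `r = F² + G²`. The system reads `Z' = -i η' Z + w` with `η' = (n-1)H`
and forcing term `w = (1/c)(-(n-3)FG/r + i(1 + (n-3)G²/r))`, of modulus at most
`√2 (n-2)/c`, while `Z_∞ = G_∞ + iF_∞ = e^{-iη}` solves the unforced equation. In the
rotating frame `(e^{iη} Z)' = e^{iη} w`, so the mean value theorem gives
`|Z - Z_∞| = |e^{iη} Z - 1| ≤ √2 (n-2) |s| / c`.
-/

open Complex

lemma forcing_sq_add_sq_le {m x y : ℝ} (hm : 0 ≤ m) (hxy : 0 < x ^ 2 + y ^ 2) :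
    (1 + m * y ^ 2 / (x ^ 2 + y ^ 2)) ^ 2 + (m * x * y / (x ^ 2 + y ^ 2)) ^ 2
      ≤ 2 * (m + 1) ^ 2 := by
  set r := x ^ 2 + y ^ 2
  have hy : y ^ 2 / r ≤ 1 := (div_le_one hxy).2 (by nlinarith [sq_nonneg x])
  have hxy' : |x * y / r| ≤ 1 := by
    rw [abs_div, abs_of_pos hxy, div_le_one hxy, abs_mul]
    nlinarith [sq_nonneg (|x| - |y|), sq_abs x, sq_abs y, abs_nonneg x, abs_nonneg y]
  have h1 : (1 + m * (y ^ 2 / r)) ^ 2 ≤ (m + 1) ^ 2 := by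
    have : 0 ≤ y ^ 2 / r := by positivity
    gcongr ?_ ^ 2
    nlinarith
  have h2 : (m * (x * y / r)) ^ 2 ≤ (m + 1) ^ 2 := by
    rw [← sq_abs, abs_mul, abs_of_nonneg hm]
    gcongr
    nlinarith [abs_nonneg (x * y / r)]
  rw [mul_div_assoc, mul_assoc, mul_div_assoc]
  linarith

lemma hasDerivAt_exp_mul_I_mul {η : ℝ → ℝ} {η' : ℝ} {Z : ℝ → ℂ} {w : ℂ} {s : ℝ}
    (hη : HasDerivAt η η' s) (hZ : HasDerivAt Z (-(η' * I) * Z s + w) s) :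
    HasDerivAt (fun t => cexp (η t * I) * Z t) (cexp (η s * I) * w) s :=
  ((hη.ofReal_comp.mul_const I).cexp.mul hZ).congr_deriv (by ring)

lemma norm_sub_exp_neg_mul_I_le {η η' : ℝ → ℝ} {Z w : ℝ → ℂ} {K : ℝ}
    (hη : ∀ s, HasDerivAt η (η' s) s) (hZ : ∀ s, HasDerivAt Z (-(η' s * I) * Z s + w s) s)
    (hw : ∀ s, ‖w s‖ ≤ K) (hη0 : η 0 = 0) (hZ0 : Z 0 = 1) (s : ℝ) :
    ‖Z s - cexp (-η s * I)‖ ≤ K * |s| := by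
  have hmvt := convex_univ.norm_image_sub_le_of_norm_hasDerivWithin_le
    (fun t _ => (hasDerivAt_exp_mul_I_mul (hη t) (hZ t)).hasDerivWithinAt)
    (fun t _ => (by simpa [norm_mul, norm_exp_ofReal_mul_I] using hw t))
    (Set.mem_univ 0) (Set.mem_univ s)
  have hrot : cexp (η s * I) * (Z s - cexp (-η s * I)) = cexp (η s * I) * Z s - 1 := by
    rw [mul_sub, ← Complex.exp_add]
    simp
  calc ‖Z s - cexp (-η s * I)‖ = ‖cexp (η s * I) * (Z s - cexp (-η s * I))‖ := by
        rw [norm_mul, norm_exp_ofReal_mul_I, one_mul]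
    _ ≤ K * |s| := by
        rw [hrot]
        simpa [hη0, hZ0] using hmvt

lemma sq_norm_add_mul_I_sub_exp_neg_mul_I (x y θ : ℝ) :
    ‖(x + y * I : ℂ) - cexp (-θ * I)‖ ^ 2 = (y - -Real.sin θ) ^ 2 + (x - Real.cos θ) ^ 2 := by
  rw [Complex.sq_norm, normSq_apply, ← ofReal_neg]
  simp only [sub_re, sub_im, add_re, add_im, ofReal_re, ofReal_im, mul_re, mul_im, I_re, I_im,
    exp_ofReal_mul_I_re, exp_ofReal_mul_I_im, Real.cos_neg, Real.sin_neg]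
  ring

theorem stmt_4_general (n : ℕ) (hn : 3 ≤ n) (H : ℝ → ℝ) (hH : Continuous H) (c : ℝ)
    (F G : ℝ → ℝ)
    (hFG : ∀ s, 0 < F s ^ 2 + G s ^ 2)
    (hF : ∀ s, HasDerivAt F
      (-((n:ℝ) - 1) * H s * G s
        + (1 / c) * (1 + ((n:ℝ) - 3) * G s ^ 2 / (F s ^ 2 + G s ^ 2))) s)
    (hG : ∀ s, HasDerivAt G
      (((n:ℝ) - 1) * H s * F s
        - (1 / c) * (((n:ℝ) - 3) * F s * G s / (F s ^ 2 + G s ^ 2))) s)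
    (hF0 : F 0 = 0) (hG0 : G 0 = 1) :
    ∀ s : ℝ,
      (F s - (-Real.sin (((n:ℝ) - 1) * ∫ t in (0:ℝ)..s, H t))) ^ 2
        + (G s - Real.cos (((n:ℝ) - 1) * ∫ t in (0:ℝ)..s, H t)) ^ 2
      ≤ 2 * ((n:ℝ) - 2) ^ 2 * s ^ 2 / c ^ 2 := by
  intro s
  set m : ℝ := n - 3
  have hm : 0 ≤ m := sub_nonneg.2 (by exact_mod_cast hn)
  set P : ℝ → ℝ := fun t => (1 / c) * (1 + m * G t ^ 2 / (F t ^ 2 + G t ^ 2))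
  set Q : ℝ → ℝ := fun t => (1 / c) * (m * F t * G t / (F t ^ 2 + G t ^ 2))
  have hη (t : ℝ) : HasDerivAt (fun t => ((n:ℝ) - 1) * ∫ u in (0:ℝ)..t, H u) ((n - 1) * H t) t :=
    ((hH.integral_hasStrictDerivAt 0 t).hasDerivAt).const_mul _
  have hZ (t : ℝ) : HasDerivAt (fun t => (G t + F t * I : ℂ))
      (-((((n:ℝ) - 1) * H t : ℝ) * I) * (G t + F t * I) + ((-Q t : ℝ) + P t * I)) t :=
    ((hG t).ofReal_comp.add ((hF t).ofReal_comp.mul_const I)).congr_deriv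
      (by simp only [P, Q]; push_cast; linear_combination ((n - 1) * H t * F t : ℂ) * I_sq)
  have hw (t : ℝ) : ‖((-Q t : ℝ) + P t * I : ℂ)‖ ≤ √(2 * (n - 2) ^ 2 / c ^ 2) := by
    rw [norm_add_mul_I]
    gcongr
    calc (-Q t) ^ 2 + P t ^ 2
        = (1 / c) ^ 2 * ((1 + m * G t ^ 2 / (F t ^ 2 + G t ^ 2)) ^ 2
            + (m * F t * G t / (F t ^ 2 + G t ^ 2)) ^ 2) := by ring
      _ ≤ (1 / c) ^ 2 * (2 * (m + 1) ^ 2) := by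
        gcongr
        exact forcing_sq_add_sq_le hm (hFG t)
      _ = 2 * (n - 2) ^ 2 / c ^ 2 := by ring
  have hbound := norm_sub_exp_neg_mul_I_le hη hZ hw (by simp) (by simp [hF0, hG0]) s
  rw [← sq_norm_add_mul_I_sub_exp_neg_mul_I]
  calc _ ≤ (√(2 * (n - 2) ^ 2 / c ^ 2) * |s|) ^ 2 := by gcongr
    _ = _ := by
      rw [mul_pow, sq_abs, Real.sq_sqrt (by positivity)]
      ring

/-- Quantitative convergence of `(F_c, G_c)` to `(F_∞, G_∞) = (-sin η, cos η)` with
`η(s) = (n-1)∫₀^s H`, for the normalized quantities of a rotational generating curve: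
`(F_c - F_∞)² + (G_c - G_∞)² ≤ 2(n-2)² s²/c²`. -/
theorem stmt_4 (n : ℕ) (hn : 3 ≤ n) (H : ℝ → ℝ) (hH : Continuous H) (c : ℝ) (hc : 0 < c)
    (F G : ℝ → ℝ)
    (hFG : ∀ s, 0 < F s ^ 2 + G s ^ 2)
    (hF : ∀ s, HasDerivAt F
      (-((n:ℝ) - 1) * H s * G s
        + (1 / c) * (1 + ((n:ℝ) - 3) * G s ^ 2 / (F s ^ 2 + G s ^ 2))) s)
    (hG : ∀ s, HasDerivAt G
      (((n:ℝ) - 1) * H s * F s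
        - (1 / c) * (((n:ℝ) - 3) * F s * G s / (F s ^ 2 + G s ^ 2))) s)
    (hF0 : F 0 = 0) (hG0 : G 0 = 1) :
    ∀ s : ℝ,
      (F s - (-Real.sin (((n:ℝ) - 1) * ∫ t in (0:ℝ)..s, H t))) ^ 2
        + (G s - Real.cos (((n:ℝ) - 1) * ∫ t in (0:ℝ)..s, H t)) ^ 2
      ≤ 2 * ((n:ℝ) - 2) ^ 2 * s ^ 2 / c ^ 2 :=
  stmt_4_general n hn H hH c F G hFG hF hG hF0 hG0
end

section
/- Let l, m ≥ 1, n = l+m+2, H continuous, and let (x,y) be a unit-speed solution of l y'/x - m x'/y - (x''y' - x'y'') + (n-1)H = 0 with x,y > 0 on [0,b), such that y(s) → 0 and x(s) → x_b > 0 as s → b. Then x'(s) → 0 as s → b. -/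
open Set Filter Topology

/-!
Unit speed gives `x'x'' + y'y'' = 0`, so the equation becomes `x'' = y'κ`, `y'' = -x'κ` with
`κ = l y'/x - m x'/y + (n-1) H`. In `F = y^m x'` the singular term `-m x'/y` cancels:
`F' = y^m y' (l y'/x + (n-1) H)`, hence `|F'| ≤ C y^m` near `b`, where `x` stays away from `0`.
Near `b` the term `m x'^2/y` makes `y'' > 0` at every critical point of `y`, so `y` can never
start increasing again (it tends to `0`): `y' < 0` near `b`. Integrating `F'` over `[s, b)`, where
`F → 0` and `y ≤ y(s)`, gives `y(s)^m |x'(s)| ≤ C y(s)^m (b - s)`, i.e. `|x'(s)| ≤ C (b - s)`.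
-/

lemma mul_deriv_add_mul_deriv_eq_zero_of_sq_add_sq_eq {U : Set ℝ} (hU : IsOpen U)
    {p q p' q' : ℝ → ℝ} {c s : ℝ} (hp : HasDerivAt p (p' s) s) (hq : HasDerivAt q (q' s) s)
    (hpq : ∀ t ∈ U, p t ^ 2 + q t ^ 2 = c) (hs : s ∈ U) :
    p s * p' s + q s * q' s = 0 := by
  have hd : HasDerivAt (fun t => p t ^ 2 + q t ^ 2) (2 * p s * p' s + 2 * q s * q' s) s := by
    simpa using (hp.fun_pow 2).fun_add (hq.fun_pow 2)
  have hconst : (fun t => p t ^ 2 + q t ^ 2) =ᶠ[𝓝 s] fun _ => c :=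
    eventually_of_mem (hU.mem_nhds hs) hpq
  linarith [hd.unique ((hasDerivAt_const s c).congr_of_eventuallyEq hconst)]

lemma eq_mul_of_sq_add_sq_eq_one_of_mul_add_mul_eq_zero {p q p' q' : ℝ}
    (hunit : p ^ 2 + q ^ 2 = 1) (horth : p * p' + q * q' = 0) :
    p' = q * (p' * q - p * q') ∧ q' = -p * (p' * q - p * q') :=
  ⟨by linear_combination p * horth - p' * hunit, by linear_combination q * horth - q' * hunit⟩

lemma abs_le_mul_sub_of_tendsto_zero {F D : ℝ → ℝ} {s b K : ℝ} (hsb : s < b)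
    (hF : ∀ t ∈ Ico s b, HasDerivAt F (D t) t) (hD : ∀ t ∈ Ico s b, |D t| ≤ K)
    (hlim : Tendsto F (𝓝[<] b) (𝓝 0)) : |F s| ≤ K * (b - s) := by
  have hincr : ∀ t ∈ Ico s b, |F t - F s| ≤ K * (t - s) := fun t ht =>
    norm_image_sub_le_of_norm_deriv_le_segment'
      (fun u hu => (hF u ⟨hu.1, hu.2.trans_lt ht.2⟩).hasDerivWithinAt)
      (fun u hu => hD u ⟨hu.1, hu.2.trans ht.2⟩) t (right_mem_Icc.2 ht.1)
  have hbound : Tendsto (fun t => K * (t - s)) (𝓝[<] b) (𝓝 (K * (b - s))) :=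
    ((continuous_const.mul (continuous_id.sub continuous_const)).tendsto b).mono_left
      nhdsWithin_le_nhds
  have := le_of_tendsto_of_tendsto ((hlim.sub_const (F s)).abs) hbound <|
    eventually_of_mem (Ioo_mem_nhdsLT hsb) fun t ht => hincr t ⟨ht.1.le, ht.2⟩
  rwa [zero_sub, abs_neg] at this

lemma abs_le_mul_sub_of_weight_mul_tendsto_zero {w f D : ℝ → ℝ} {a b C s : ℝ}
    (hw : AntitoneOn w (Ioo a b)) (hwpos : ∀ t ∈ Ioo a b, 0 < w t)
    (hF : ∀ t ∈ Ioo a b, HasDerivAt (fun u => w u * f u) (D t) t)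
    (hD : ∀ t ∈ Ioo a b, |D t| ≤ C * w t)
    (hlim : Tendsto (fun u => w u * f u) (𝓝[<] b) (𝓝 0)) (hs : s ∈ Ioo a b) :
    |f s| ≤ C * (b - s) := by
  have hws := hwpos s hs
  have hC : 0 ≤ C := nonneg_of_mul_nonneg_left ((abs_nonneg _).trans (hD s hs)) hws
  have hsub : Ico s b ⊆ Ioo a b := fun t ht => ⟨hs.1.trans_le ht.1, ht.2⟩
  have h := abs_le_mul_sub_of_tendsto_zero (K := C * w s) hs.2 (fun t ht => hF t (hsub ht))
    (fun t ht => (hD t (hsub ht)).trans <| mul_le_mul_of_nonneg_left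
      (hw hs (hsub ht) ht.1) hC) hlim
  rw [abs_mul, abs_of_pos hws] at h
  exact le_of_mul_le_mul_left (h.trans_eq (by ring)) hws

lemma deriv_neg_of_tendsto_zero_of_second_deriv_pos_at_critical {y y' y'' : ℝ → ℝ}
    {a b s : ℝ} (hy : ∀ t ∈ Ioo a b, HasDerivAt y (y' t) t)
    (hy' : ∀ t ∈ Ioo a b, HasDerivAt y' (y'' t) t) (hpos : ∀ t ∈ Ioo a b, 0 < y t)
    (hlim : Tendsto y (𝓝[<] b) (𝓝 0)) (hcrit : ∀ t ∈ Ioo a b, y' t = 0 → 0 < y'' t)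
    (hs : s ∈ Ioo a b) : y' s < 0 := by
  by_contra! h0
  have hsub : Ico s b ⊆ Ioo a b := fun t ht => ⟨hs.1.trans_le ht.1, ht.2⟩
  -- fencing: `-y'` starts `≤ 0` and has negative derivative wherever it touches `0`
  have hnonneg : ∀ t ∈ Ico s b, 0 ≤ y' t := by
    intro t ht
    have hst : Icc s t ⊆ Ioo a b := fun u hu => hsub ⟨hu.1, hu.2.trans_lt ht.2⟩
    have := image_le_of_deriv_right_lt_deriv_boundary (f := fun u => -y' u)
      (f' := fun u => -y'' u) (B := fun _ => 0) (B' := fun _ => 0)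
      (fun u hu => (hy' u (hst hu)).continuousAt.neg.continuousWithinAt)
      (fun u hu => (hy' u (hst (Ico_subset_Icc_self hu))).neg.hasDerivWithinAt)
      (by simpa using h0) (fun _ => hasDerivAt_const _ _)
      (fun u hu hu0 => by
        simpa using hcrit u (hst (Ico_subset_Icc_self hu)) (neg_eq_zero.mp hu0))
      (right_mem_Icc.2 ht.1)
    simpa using this
  have hmono : MonotoneOn y (Ico s b) := by
    refine monotoneOn_of_hasDerivWithinAt_nonneg (f' := y') (convex_Ico s b)
      (fun u hu => (hy u (hsub hu)).continuousAt.continuousWithinAt) (fun u hu => ?_)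
      (fun u hu => ?_) <;> rw [interior_Ico] at hu
    · exact (hy u (hsub (Ioo_subset_Ico_self hu))).hasDerivWithinAt
    · exact hnonneg u (Ioo_subset_Ico_self hu)
  have : y s ≤ 0 := ge_of_tendsto hlim <| eventually_of_mem (Ioo_mem_nhdsLT hs.2) fun t ht =>
    hmono (left_mem_Ico.2 hs.2) (Ioo_subset_Ico_self ht) ht.1.le
  exact (hpos s hs).not_ge this

lemma abs_mul_mul_div_add_mul_le {Y v X h c M p q : ℝ} (hY : 0 ≤ Y) (hv : |v| ≤ 1)
    (hc : 0 < c) (hX : c < X) (hh : |h| ≤ M) (hp : 0 ≤ p) (hq : 0 ≤ q) :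
    |Y * v * (p * v / X + q * h)| ≤ (p / c + q * M) * Y := by
  have hpv : |p * v / X| ≤ p / c := by
    rw [abs_div, abs_mul, abs_of_nonneg hp, abs_of_pos (hc.trans hX)]
    exact div_le_div₀ hp (mul_le_of_le_one_right hp hv) hc hX.le
  have hqh : |q * h| ≤ q * M := by
    rw [abs_mul, abs_of_nonneg hq]
    exact mul_le_mul_of_nonneg_left hh hq
  rw [abs_mul, abs_mul, abs_of_nonneg hY]
  calc _ ≤ Y * 1 * (p / c + q * M) :=
        mul_le_mul (mul_le_mul_of_nonneg_left hv hY) ((abs_add_le _ _).trans (add_le_add hpv hqh))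
          (abs_nonneg _) (by positivity)
    _ = _ := by ring

/-- The curvature `x''y' - x'y''` that the profile equation prescribes for the unit-speed
curve `(x, y)`. -/
noncomputable def prescribedCurvature (l m : ℕ) (H x y x' y' : ℝ → ℝ) (s : ℝ) : ℝ :=
  l * y' s / x s - m * x' s / y s + (l + m + 1) * H s

section ProfileCurve

variable {l m : ℕ} {H x y x' y' x'' y'' : ℝ → ℝ}

local notation "κ" => prescribedCurvature l m H x y x' y'

lemma deriv_eq_mul_prescribedCurvature {U : Set ℝ} (hU : IsOpen U)
    (hx' : ∀ s ∈ U, HasDerivAt x' (x'' s) s) (hy' : ∀ s ∈ U, HasDerivAt y' (y'' s) s)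
    (hunit : ∀ s ∈ U, x' s ^ 2 + y' s ^ 2 = 1)
    (heq : ∀ s ∈ U, (l:ℝ) * y' s / x s - (m:ℝ) * x' s / y s - (x'' s * y' s - x' s * y'' s)
        + ((l:ℝ) + (m:ℝ) + 1) * H s = 0) {s : ℝ} (hs : s ∈ U) :
    x'' s = y' s * κ s ∧ y'' s = -x' s * κ s := by
  have hκ : κ s = x'' s * y' s - x' s * y'' s := by
    unfold prescribedCurvature
    linarith [heq s hs]
  rw [hκ]
  exact eq_mul_of_sq_add_sq_eq_one_of_mul_add_mul_eq_zero (hunit s hs)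
    (mul_deriv_add_mul_deriv_eq_zero_of_sq_add_sq_eq hU (hx' s hs) (hy' s hs) hunit hs)

lemma second_deriv_pos_of_deriv_eq_zero {s M : ℝ} (hy'' : y'' s = -x' s * κ s)
    (hunit : x' s ^ 2 + y' s ^ 2 = 1) (hy : 0 < y s) (hH : |H s| ≤ M)
    (hsmall : y s * ((l + m + 1) * M) < m) (hcrit : y' s = 0) : 0 < y'' s := by
  have hx'sq : x' s ^ 2 = 1 := by simpa [hcrit] using hunit
  have hxH : x' s * H s ≤ M := by
    have hx' : |x' s| ≤ 1 := (sq_le_one_iff_abs_le_one _).1 hx'sq.le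
    calc x' s * H s ≤ |x' s| * |H s| := (le_abs_self _).trans (abs_mul _ _).le
      _ ≤ 1 * M := mul_le_mul hx' hH (abs_nonneg _) zero_le_one
      _ = M := one_mul M
  have hyy'' : y s * y'' s = m - (l + m + 1) * (x' s * H s) * y s := by
    rw [hy'', prescribedCurvature, hcrit]
    field_simp
    linear_combination (m:ℝ) * hx'sq
  have : 0 < y s * y'' s := by
    have := mul_le_mul_of_nonneg_left (mul_le_mul_of_nonneg_right hxH hy.le)
      (by positivity : (0:ℝ) ≤ l + m + 1)
    rw [hyy'']
    linarith
  exact pos_of_mul_pos_right this hy.le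

lemma hasDerivAt_pow_mul_deriv {s : ℝ} (hy : HasDerivAt y (y' s) s)
    (hx' : HasDerivAt x' (x'' s) s) (hx'' : x'' s = y' s * κ s) (hpos : y s ≠ 0) :
    HasDerivAt (fun t => y t ^ m * x' t)
      (y s ^ m * y' s * (l * y' s / x s + (l + m + 1) * H s)) s := by
  refine ((hy.fun_pow m).fun_mul hx').congr_deriv ?_
  rw [hx'', prescribedCurvature]
  rcases m with _ | k
  · simp
  · simp only [Nat.add_sub_cancel]
    field_simp
    ring

lemma abs_horizontal_velocity_le_mul_sub {a b c M s : ℝ} (hm : 1 ≤ m)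
    (hy : ∀ t ∈ Ioo a b, HasDerivAt y (y' t) t) (hx' : ∀ t ∈ Ioo a b, HasDerivAt x' (x'' t) t)
    (hy' : ∀ t ∈ Ioo a b, HasDerivAt y' (y'' t) t)
    (hframe : ∀ t ∈ Ioo a b, x'' t = y' t * κ t ∧ y'' t = -x' t * κ t)
    (hunit : ∀ t ∈ Ioo a b, x' t ^ 2 + y' t ^ 2 = 1) (hypos : ∀ t ∈ Ioo a b, 0 < y t)
    (hylim : Tendsto y (𝓝[<] b) (𝓝 0)) (hc : 0 < c) (hx : ∀ t ∈ Ioo a b, c < x t)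
    (hH : ∀ t ∈ Ioo a b, |H t| ≤ M) (hsmall : ∀ t ∈ Ioo a b, y t * ((l + m + 1) * M) < m)
    (hs : s ∈ Ioo a b) :
    |x' s| ≤ (l / c + (l + m + 1) * M) * (b - s) := by
  have hx'le t (ht : t ∈ Ioo a b) : |x' t| ≤ 1 :=
    (sq_le_one_iff_abs_le_one _).1 (by nlinarith [hunit t ht, sq_nonneg (y' t)])
  have hy'le t (ht : t ∈ Ioo a b) : |y' t| ≤ 1 :=
    (sq_le_one_iff_abs_le_one _).1 (by nlinarith [hunit t ht, sq_nonneg (x' t)])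
  have hdec : ∀ t ∈ Ioo a b, y' t < 0 := fun t ht =>
    deriv_neg_of_tendsto_zero_of_second_deriv_pos_at_critical hy hy' hypos hylim
      (fun u hu => second_deriv_pos_of_deriv_eq_zero (hframe u hu).2 (hunit u hu) (hypos u hu)
        (hH u hu) (hsmall u hu)) ht
  have hanti : AntitoneOn (fun t => y t ^ m) (Ioo a b) := by
    have hyanti : AntitoneOn y (Ioo a b) := by
      refine antitoneOn_of_hasDerivWithinAt_nonpos (f' := y') (convex_Ioo a b)
        (fun u hu => (hy u hu).continuousAt.continuousWithinAt) (fun u hu => ?_)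
        (fun u hu => ?_) <;> rw [interior_Ioo] at hu
      · exact (hy u hu).hasDerivWithinAt
      · exact (hdec u hu).le
    exact fun u hu v hv huv => pow_le_pow_left₀ (hypos v hv).le (hyanti hu hv huv) m
  have hlim : Tendsto (fun t => y t ^ m * x' t) (𝓝[<] b) (𝓝 0) := by
    have hpow : Tendsto (fun t => y t ^ m) (𝓝[<] b) (𝓝 0) := by
      simpa [zero_pow (by omega : m ≠ 0)] using hylim.pow m
    refine squeeze_zero_norm' ?_ hpow
    filter_upwards [Ioo_mem_nhdsLT (hs.1.trans hs.2)] with t ht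
    rw [Real.norm_eq_abs, abs_mul, abs_of_nonneg (pow_nonneg (hypos t ht).le m)]
    exact mul_le_of_le_one_right (pow_nonneg (hypos t ht).le m) (hx'le t ht)
  exact abs_le_mul_sub_of_weight_mul_tendsto_zero hanti (fun t ht => pow_pos (hypos t ht) m)
    (fun t ht => hasDerivAt_pow_mul_deriv (hy t ht) (hx' t ht) (hframe t ht).1 (hypos t ht).ne')
    (fun t ht => abs_mul_mul_div_add_mul_le (pow_nonneg (hypos t ht).le m) (hy'le t ht) hc
      (hx t ht) (hH t ht) l.cast_nonneg (by positivity)) hlim hs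

end ProfileCurve

theorem stmt_11_general (l m : ℕ) (hm : 1 ≤ m) (b : ℝ) (hb : 0 < b)
    (H x y x' y' x'' y'' : ℝ → ℝ) (xb : ℝ) (hxb : 0 < xb)
    (hy : ∀ s ∈ Set.Ico (0:ℝ) b, HasDerivWithinAt y (y' s) (Set.Ico 0 b) s)
    (hx' : ∀ s ∈ Set.Ico (0:ℝ) b, HasDerivWithinAt x' (x'' s) (Set.Ico 0 b) s)
    (hy' : ∀ s ∈ Set.Ico (0:ℝ) b, HasDerivWithinAt y' (y'' s) (Set.Ico 0 b) s)
    (hHc : ContinuousOn H (Set.Icc 0 b))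
    (hypos : ∀ s ∈ Set.Ico (0:ℝ) b, 0 < y s)
    (hunit : ∀ s ∈ Set.Ico (0:ℝ) b, x' s ^ 2 + y' s ^ 2 = 1)
    (heq : ∀ s ∈ Set.Ico (0:ℝ) b,
      (l:ℝ) * y' s / x s - (m:ℝ) * x' s / y s - (x'' s * y' s - x' s * y'' s)
        + ((l:ℝ) + (m:ℝ) + 1) * H s = 0)
    (hylim : Filter.Tendsto y (nhdsWithin b (Set.Iio b)) (nhds 0))
    (hxlim : Filter.Tendsto x (nhdsWithin b (Set.Iio b)) (nhds xb)) :
    Filter.Tendsto x' (nhdsWithin b (Set.Iio b)) (nhds 0) := by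
  obtain ⟨M, hM⟩ := isCompact_Icc.exists_bound_of_continuousOn hHc
  have hnear : ∀ᶠ s in 𝓝[<] b,
      s ∈ Ioo 0 b ∧ xb / 2 < x s ∧ y s * ((l + m + 1) * M) < m :=
    Eventually.and (Ioo_mem_nhdsLT hb) <| (hxlim.eventually_const_lt (half_lt_self hxb)).and <|
      (hylim.mul_const _).eventually_lt_const (by rw [zero_mul]; exact Nat.cast_pos.2 hm)
  obtain ⟨a, hab, ha⟩ := (mem_nhdsLT_iff_exists_Ioo_subset' (sub_one_lt b)).1 hnear
  have hI t (ht : t ∈ Ioo a b) : t ∈ Ico 0 b := Ioo_subset_Ico_self (ha ht).1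
  have hderiv {f f' : ℝ → ℝ} (hf : ∀ s ∈ Ico 0 b, HasDerivWithinAt f (f' s) (Ico 0 b) s)
      (t : ℝ) (ht : t ∈ Ioo a b) : HasDerivAt f (f' t) t :=
    (hf t (hI t ht)).hasDerivAt (Ico_mem_nhds (ha ht).1.1 (ha ht).1.2)
  have hframe t (ht : t ∈ Ioo a b) :=
    deriv_eq_mul_prescribedCurvature isOpen_Ioo (hderiv hx') (hderiv hy')
      (fun u hu => hunit u (hI u hu)) (fun u hu => heq u (hI u hu)) ht
  refine squeeze_zero_norm' (eventually_of_mem (Ioo_mem_nhdsLT hab) fun s hs =>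
    abs_horizontal_velocity_le_mul_sub hm (hderiv hy) (hderiv hx') (hderiv hy') hframe
      (fun t ht => hunit t (hI t ht)) (fun t ht => hypos t (hI t ht)) hylim (half_pos hxb)
      (fun t ht => (ha ht).2.1) (fun t ht => by simpa using hM t (Ioo_subset_Icc_self (ha ht).1))
      (fun t ht => (ha ht).2.2) hs) ?_
  have hcont : Continuous fun s => (l / (xb / 2) + (l + m + 1) * M) * (b - s) := by fun_prop
  simpa using (hcont.tendsto b).mono_left nhdsWithin_le_nhds

/-- If the generating curve of an `O(l+1)×O(m+1)`-type hypersurface reaches the `x`-axis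
away from the origin (`y → 0`, `x → x_b > 0` as `s → b`), then `x'(s) → 0`. -/
theorem stmt_11 (l m : ℕ) (hl : 1 ≤ l) (hm : 1 ≤ m) (b : ℝ) (hb : 0 < b)
    (H x y x' y' x'' y'' : ℝ → ℝ) (xb : ℝ) (hxb : 0 < xb)
    (hx : ∀ s ∈ Set.Ico (0:ℝ) b, HasDerivWithinAt x (x' s) (Set.Ico 0 b) s)
    (hy : ∀ s ∈ Set.Ico (0:ℝ) b, HasDerivWithinAt y (y' s) (Set.Ico 0 b) s)
    (hx' : ∀ s ∈ Set.Ico (0:ℝ) b, HasDerivWithinAt x' (x'' s) (Set.Ico 0 b) s)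
    (hy' : ∀ s ∈ Set.Ico (0:ℝ) b, HasDerivWithinAt y' (y'' s) (Set.Ico 0 b) s)
    (hHc : ContinuousOn H (Set.Icc 0 b))
    (hxpos : ∀ s ∈ Set.Ico (0:ℝ) b, 0 < x s)
    (hypos : ∀ s ∈ Set.Ico (0:ℝ) b, 0 < y s)
    (hunit : ∀ s ∈ Set.Ico (0:ℝ) b, x' s ^ 2 + y' s ^ 2 = 1)
    (heq : ∀ s ∈ Set.Ico (0:ℝ) b,
      (l:ℝ) * y' s / x s - (m:ℝ) * x' s / y s - (x'' s * y' s - x' s * y'' s)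
        + ((l:ℝ) + (m:ℝ) + 1) * H s = 0)
    (hylim : Filter.Tendsto y (nhdsWithin b (Set.Iio b)) (nhds 0))
    (hxlim : Filter.Tendsto x (nhdsWithin b (Set.Iio b)) (nhds xb)) :
    Filter.Tendsto x' (nhdsWithin b (Set.Iio b)) (nhds 0) :=
  stmt_11_general l m hm b hb H x y x' y' x'' y'' xb hxb hy hx' hy' hHc hypos hunit heq hylim hxlim
end

section
/- Let l, m ≥ 1, n = l+m+2, H continuous, and let (x,y) be a unit-speed solution of l y'/x - m x'/y - (x''y' - x'y'') + (n-1)H = 0 with x,y > 0 on an interval with endpoint b, such that y(s) → 0 as s → b and x(s) → x_b > 0. Then y'(s) ≠ 0 for all s in some neighborhood of b (intersected with the domain). -/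
/-!
At a critical point of `y`, unit speed gives `x' = ±1` and the equation becomes
`y'' = m / y ∓ (l + m + 1) H`. Since `H` is bounded while `m / y → ∞` at `b`, every critical
point of `y` close to `b` is a strict local minimum. Past such a point `y'` can never become
negative again (continuous induction: wherever `y' = 0`, `y'' > 0` pushes `y'` up), so `y` is
nondecreasing up to `b` and cannot tend to `0`.
-/

open Set Filter Topology

theorem HasDerivAt.eventually_nhdsGT_pos {g : ℝ → ℝ} {g' s : ℝ} (hg : HasDerivAt g g' s)
    (hg' : 0 < g') (hgs : g s = 0) : ∀ᶠ t in 𝓝[>] s, 0 < g t := by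
  filter_upwards [nhdsGT_le_nhdsNE s (hasDerivAt_iff_tendsto_slope.mp hg |>.eventually
    (eventually_gt_nhds hg')), self_mem_nhdsWithin] with t hslope hst
  exact pos_of_slope_pos hst hslope hgs

theorem nonneg_of_deriv_pos_at_zeros {g g' : ℝ → ℝ} {a b s : ℝ}
    (hg : ∀ t ∈ Ioo a b, HasDerivAt g (g' t) t) (hzero : ∀ t ∈ Ioo a b, g t = 0 → 0 < g' t)
    (hs : s ∈ Ioo a b) (hgs : 0 ≤ g s) : ∀ t ∈ Ico s b, 0 ≤ g t := by
  intro t ht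
  have hsub : Icc s t ⊆ Ioo a b := Icc_subset_Ioo hs.1 ht.2
  have hclosed : IsClosed ({w | 0 ≤ g w} ∩ Icc s t) := by
    rw [inter_comm]
    exact ContinuousOn.preimage_isClosed_of_isClosed
      (fun w hw ↦ (hg w (hsub hw)).continuousAt.continuousWithinAt) isClosed_Icc isClosed_Ici
  refine hclosed.Icc_subset_of_forall_mem_nhdsWithin hgs ?_ ⟨ht.1, le_rfl⟩
  rintro w ⟨hw, hwst⟩
  have hwab := hsub (Ico_subset_Icc_self hwst)
  rcases (show 0 ≤ g w from hw).eq_or_lt with hzw | hpos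
  · exact ((hg w hwab).eventually_nhdsGT_pos (hzero w hwab hzw.symm) hzw.symm).mono
      fun _ h ↦ h.le
  · exact mem_nhdsWithin_of_mem_nhds
      (((hg w hwab).continuousAt.eventually (lt_mem_nhds hpos)).mono fun _ h ↦ h.le)

theorem eventually_deriv_ne_zero_of_tendsto_zero {f f' f'' : ℝ → ℝ} {a b : ℝ} (hab : a < b)
    (hf : ∀ t ∈ Ioo a b, HasDerivAt f (f' t) t) (hf' : ∀ t ∈ Ioo a b, HasDerivAt f' (f'' t) t)
    (hcrit : ∀ t ∈ Ioo a b, f' t = 0 → 0 < f'' t) (hpos : ∀ t ∈ Ioo a b, 0 < f t)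
    (hlim : Tendsto f (𝓝[<] b) (𝓝 0)) : ∀ᶠ t in 𝓝[<] b, f' t ≠ 0 := by
  by_contra hfreq
  obtain ⟨s, hf's, hs⟩ :=
    ((not_eventually.mp hfreq).and_eventually (Ioo_mem_nhdsLT hab)).exists
  rw [not_ne_iff] at hf's
  have hmono : MonotoneOn f (Ico s b) := by
    refine monotoneOn_of_hasDerivWithinAt_nonneg (f' := f') (convex_Ico s b)
      (fun t ht ↦ (hf t ⟨hs.1.trans_le ht.1, ht.2⟩).continuousAt.continuousWithinAt)
      (fun t ht ↦ ?_) (fun t ht ↦ ?_) <;> simp only [interior_Ico] at ht ⊢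
    · exact (hf t ⟨hs.1.trans ht.1, ht.2⟩).hasDerivWithinAt
    · exact nonneg_of_deriv_pos_at_zeros hf' hcrit hs hf's.ge t (Ioo_subset_Ico_self ht)
  have hge : ∀ᶠ t in 𝓝[<] b, f s ≤ f t :=
    eventually_mem_set.mpr (Ico_mem_nhdsLT hs.2) |>.mono
      fun t ht ↦ hmono (left_mem_Ico.mpr hs.2) ht ht.1
  exact (hpos s hs).not_ge (ge_of_tendsto hlim hge)

theorem second_deriv_pos_of_deriv_eq_zero_s12 {l m K x y x' y' x'' y'' h : ℝ} (hy' : y' = 0)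
    (hunit : x' ^ 2 + y' ^ 2 = 1)
    (heq : l * y' / x - m * x' / y - (x'' * y' - x' * y'') + K * h = 0)
    (hh : |K * h| < m / y) : 0 < y'' := by
  subst hy'
  have hx' : x' ^ 2 = 1 := by simpa using hunit
  have hy'' : y'' = m / y - K * h * x' := by
    linear_combination x' * heq + (m / y - y'') * hx'
  have habs : |x'| = 1 := by simpa using (sq_eq_sq_iff_abs_eq_abs x' 1).mp (by simpa using hx')
  have hbound : K * h * x' ≤ |K * h| := by
    calc K * h * x' ≤ |K * h * x'| := le_abs_self _
      _ = |K * h| := by rw [abs_mul, habs, mul_one]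
  linarith

theorem stmt_12_general (l m : ℕ) (hm : 1 ≤ m) (b : ℝ) (hb : 0 < b)
    (H x y x' y' x'' y'' : ℝ → ℝ)
    (hy : ∀ s ∈ Set.Ico (0:ℝ) b, HasDerivWithinAt y (y' s) (Set.Ico 0 b) s)
    (hy' : ∀ s ∈ Set.Ico (0:ℝ) b, HasDerivWithinAt y' (y'' s) (Set.Ico 0 b) s)
    (hHc : ContinuousOn H (Set.Icc 0 b))
    (hypos : ∀ s ∈ Set.Ico (0:ℝ) b, 0 < y s)
    (hunit : ∀ s ∈ Set.Ico (0:ℝ) b, x' s ^ 2 + y' s ^ 2 = 1)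
    (heq : ∀ s ∈ Set.Ico (0:ℝ) b,
      (l:ℝ) * y' s / x s - (m:ℝ) * x' s / y s - (x'' s * y' s - x' s * y'' s)
        + ((l:ℝ) + (m:ℝ) + 1) * H s = 0)
    (hylim : Filter.Tendsto y (nhdsWithin b (Set.Iio b)) (nhds 0)) :
    ∀ᶠ s in nhdsWithin b (Set.Iio b), y' s ≠ 0 := by
  obtain ⟨C, hC⟩ := isCompact_Icc.exists_bound_of_continuousOn hHc
  have hblowup : Tendsto (fun s ↦ (m : ℝ) / y s) (𝓝[<] b) atTop := by
    have hy0 : Tendsto y (𝓝[<] b) (𝓝[>] 0) := tendsto_nhdsWithin_iff.mpr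
      ⟨hylim, eventually_mem_set.mpr (Ico_mem_nhdsLT hb) |>.mono hypos⟩
    simpa only [div_eq_mul_inv, Pi.inv_apply] using
      hy0.inv_tendsto_nhdsGT_zero.const_mul_atTop (by positivity : (0 : ℝ) < m)
  obtain ⟨a, hab, hsub⟩ := mem_nhdsLT_iff_exists_Ioo_subset.mp <|
    inter_mem (Ioo_mem_nhdsLT hb) (hblowup.eventually_gt_atTop (((l : ℝ) + m + 1) * C))
  have hmem : Ioo a b ⊆ Ico 0 b := fun t ht ↦ Ioo_subset_Ico_self (hsub ht).1
  have hnhds (t) (ht : t ∈ Ioo a b) : Ico 0 b ∈ 𝓝 t := Ico_mem_nhds (hsub ht).1.1 ht.2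
  refine eventually_deriv_ne_zero_of_tendsto_zero hab
    (fun t ht ↦ (hy t (hmem ht)).hasDerivAt (hnhds t ht))
    (fun t ht ↦ (hy' t (hmem ht)).hasDerivAt (hnhds t ht))
    (fun t ht hcrit ↦ ?_) (fun t ht ↦ hypos t (hmem ht)) hylim
  refine second_deriv_pos_of_deriv_eq_zero_s12 hcrit (hunit t (hmem ht)) (heq t (hmem ht)) ?_
  calc |((l : ℝ) + m + 1) * H t| = ((l : ℝ) + m + 1) * ‖H t‖ := by
        rw [abs_mul, Real.norm_eq_abs, abs_of_pos (by positivity)]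
    _ ≤ ((l : ℝ) + m + 1) * C := by gcongr; exact hC t (Ico_subset_Icc_self (hmem ht))
    _ < m / y t := (hsub ht).2

/-- If the generating curve of an `O(l+1)×O(m+1)`-type hypersurface reaches the `x`-axis
away from the origin (`y → 0`, `x → x_b > 0` as `s → b`), then `y'` does not vanish in a
neighborhood of `b`. -/
theorem stmt_12 (l m : ℕ) (hl : 1 ≤ l) (hm : 1 ≤ m) (b : ℝ) (hb : 0 < b)
    (H x y x' y' x'' y'' : ℝ → ℝ) (xb : ℝ) (hxb : 0 < xb)
    (hx : ∀ s ∈ Set.Ico (0:ℝ) b, HasDerivWithinAt x (x' s) (Set.Ico 0 b) s)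
    (hy : ∀ s ∈ Set.Ico (0:ℝ) b, HasDerivWithinAt y (y' s) (Set.Ico 0 b) s)
    (hx' : ∀ s ∈ Set.Ico (0:ℝ) b, HasDerivWithinAt x' (x'' s) (Set.Ico 0 b) s)
    (hy' : ∀ s ∈ Set.Ico (0:ℝ) b, HasDerivWithinAt y' (y'' s) (Set.Ico 0 b) s)
    (hHc : ContinuousOn H (Set.Icc 0 b))
    (hxpos : ∀ s ∈ Set.Ico (0:ℝ) b, 0 < x s)
    (hypos : ∀ s ∈ Set.Ico (0:ℝ) b, 0 < y s)
    (hunit : ∀ s ∈ Set.Ico (0:ℝ) b, x' s ^ 2 + y' s ^ 2 = 1)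
    (heq : ∀ s ∈ Set.Ico (0:ℝ) b,
      (l:ℝ) * y' s / x s - (m:ℝ) * x' s / y s - (x'' s * y' s - x' s * y'' s)
        + ((l:ℝ) + (m:ℝ) + 1) * H s = 0)
    (hylim : Filter.Tendsto y (nhdsWithin b (Set.Iio b)) (nhds 0))
    (hxlim : Filter.Tendsto x (nhdsWithin b (Set.Iio b)) (nhds xb)) :
    ∀ᶠ s in nhdsWithin b (Set.Iio b), y' s ≠ 0 :=
  stmt_12_general l m hm b hb H x y x' y' x'' y'' hy hy' hHc hypos hunit heq hylim
end
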